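/- arXiv:2206.00247 — 2 statements merged into one kernel-verified Lean document; each statement's English description precedes it below -/
import Mathlib

section
/- Let f_Bi(p,∇p) be the biaxial elastic energy density with positive constants K₁,…,K₁₂ and surface coefficients γ₁=min{K₁,K₄,K₇,K₁₀}, γ₂=min{K₂,K₅,K₈,K₁₁}, γ₃=min{K₃,K₆,K₉,K₁₂}. Then f_Bi can be rewritten as f_Bi = ½ Σᵢ γᵢ|∇nᵢ|² + W(p,∇p), where W = ½( Σᵢ kᵢ(∇·nᵢ)² + Σ_{i,j} k_{ij}(nᵢ·∇×nⱼ)² ) with kᵢ = Kᵢ − γᵢ ≥ 0 and the k_{ij} given by k₁₁=K₄−γ₁, k₂₂=K₅−γ₂, k₃₃=K₆−γ₃, k₃₁=K₇−γ₁, k₁₂=K₈−γ₂, k₂₃=K₉−γ₃, k₂₁=K₁₀−γ₁, k₃₂=K₁₁−γ₂, k₁₃=K₁₂−γ₃, all nonnegative. -/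
open Matrix

noncomputable section

/-- Partial derivative `∂ⱼ f` of a scalar function on `ℝ³`. -/
def pd (f : (Fin 3 → ℝ) → ℝ) (j : Fin 3) (x : Fin 3 → ℝ) : ℝ :=
  fderiv ℝ f x (Pi.single j 1)

/-- Divergence `∇·v`. -/
def divg (v : (Fin 3 → ℝ) → Fin 3 → ℝ) (x : Fin 3 → ℝ) : ℝ :=
  ∑ j, pd (fun y => v y j) j x

/-- Curl `∇×v`. -/
def curl (v : (Fin 3 → ℝ) → Fin 3 → ℝ) (x : Fin 3 → ℝ) : Fin 3 → ℝ :=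
  ![pd (fun y => v y 2) 1 x - pd (fun y => v y 1) 2 x,
    pd (fun y => v y 0) 2 x - pd (fun y => v y 2) 0 x,
    pd (fun y => v y 1) 0 x - pd (fun y => v y 0) 1 x]

/-- `|∇v|²`. -/
def gradsq (v : (Fin 3 → ℝ) → Fin 3 → ℝ) (x : Fin 3 → ℝ) : ℝ :=
  ∑ i, ∑ j, (pd (fun y => v y i) j x) ^ 2

/-- Convective term `(v·∇)v`. -/
def convec (v : (Fin 3 → ℝ) → Fin 3 → ℝ) (y : Fin 3 → ℝ) : Fin 3 → ℝ :=
  fun i => ∑ j, v y j * pd (fun z => v z i) j y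

/-- Surface (null Lagrangian) term `∇·[(v·∇)v − (∇·v)v]`. -/
def surfT (v : (Fin 3 → ℝ) → Fin 3 → ℝ) (x : Fin 3 → ℝ) : ℝ :=
  divg (fun y => convec v y - divg v y • v y) x


section Aux

lemma contDiff_pd {f : (Fin 3 → ℝ) → ℝ} (hf : ContDiff ℝ (⊤ : ℕ∞) f) (j : Fin 3) :
    ContDiff ℝ (⊤ : ℕ∞) (pd f j) := by
  unfold pd
  exact (hf.fderiv_right (by simp)).clm_apply contDiff_const

lemma pd_sub {f g : (Fin 3 → ℝ) → ℝ} {x : Fin 3 → ℝ} (hf : DifferentiableAt ℝ f x)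
    (hg : DifferentiableAt ℝ g x) (j : Fin 3) :
    pd (fun y => f y - g y) j x = pd f j x - pd g j x := by
  unfold pd; rw [fderiv_fun_sub hf hg]; rfl

lemma pd_mul {f g : (Fin 3 → ℝ) → ℝ} {x : Fin 3 → ℝ} (hf : DifferentiableAt ℝ f x)
    (hg : DifferentiableAt ℝ g x) (j : Fin 3) :
    pd (fun y => f y * g y) j x = pd f j x * g x + f x * pd g j x := by
  unfold pd; rw [fderiv_fun_mul hf hg]; simp; ring

lemma pd_sum {ι : Type*} {s : Finset ι} {F : ι → (Fin 3 → ℝ) → ℝ} {x : Fin 3 → ℝ}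
    (h : ∀ i ∈ s, DifferentiableAt ℝ (F i) x) (j : Fin 3) :
    pd (fun y => ∑ i ∈ s, F i y) j x = ∑ i ∈ s, pd (F i) j x := by
  unfold pd; rw [fderiv_fun_sum h]; simp

lemma pd_comm {f : (Fin 3 → ℝ) → ℝ} (hf : ContDiff ℝ (⊤ : ℕ∞) f) (i j : Fin 3) (x : Fin 3 → ℝ) :
    pd (pd f i) j x = pd (pd f j) i x := by
  have hd : ∀ y, HasFDerivAt f (fderiv ℝ f y) y :=
    fun y => (hf.differentiable (by simp) y).hasFDerivAt
  have hd2 : DifferentiableAt ℝ (fderiv ℝ f) x :=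
    ((hf.fderiv_right (m := (⊤ : ℕ∞)) (by simp)).differentiable (by simp)) x
  have hsymm := second_derivative_symmetric hd hd2.hasFDerivAt
    (Pi.single j 1) (Pi.single i 1)
  show fderiv ℝ (fun y => fderiv ℝ f y (Pi.single i 1)) x (Pi.single j 1)
      = fderiv ℝ (fun y => fderiv ℝ f y (Pi.single j 1)) x (Pi.single i 1)
  rw [fderiv_clm_apply hd2 (differentiableAt_const _),
      fderiv_clm_apply hd2 (differentiableAt_const _)]
  simpa using hsymm

lemma surfT_formula (v : (Fin 3 → ℝ) → Fin 3 → ℝ)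
    (hv : ∀ i, ContDiff ℝ (⊤ : ℕ∞) fun y => v y i) (x : Fin 3 → ℝ) :
    surfT v x = (∑ i, ∑ j, pd (fun y => v y j) i x * pd (fun y => v y i) j x)
      - (divg v x) ^ 2 := by
  have hmul : ∀ i j : Fin 3, ContDiff ℝ (⊤ : ℕ∞) fun y => v y j * pd (fun z => v z i) j y :=
    fun i j => (hv j).mul (contDiff_pd (hv i) j)
  have hconv : ∀ i : Fin 3, ContDiff ℝ (⊤ : ℕ∞) fun y => convec v y i := by
    intro i
    have : ContDiff ℝ (⊤ : ℕ∞) fun y => ∑ j, v y j * pd (fun z => v z i) j y :=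
      ContDiff.sum fun j _ => hmul i j
    exact this
  have hdivg : ContDiff ℝ (⊤ : ℕ∞) (divg v) := by
    have : ContDiff ℝ (⊤ : ℕ∞) fun y => ∑ j, pd (fun z => v z j) j y :=
      ContDiff.sum fun j _ => contDiff_pd (hv j) j
    exact this
  have hdmul : ∀ i : Fin 3, ContDiff ℝ (⊤ : ℕ∞) fun y => divg v y * v y i :=
    fun i => hdivg.mul (hv i)
  have dAt : ∀ {f : (Fin 3 → ℝ) → ℝ}, ContDiff ℝ (⊤ : ℕ∞) f → DifferentiableAt ℝ f x :=
    fun hf => (hf.differentiable (by simp)) x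
  have h0 : surfT v x = ∑ i, pd (fun y => convec v y i - divg v y * v y i) i x := rfl
  have h1 : surfT v x
      = ∑ i, (pd (fun y => convec v y i) i x - pd (fun y => divg v y * v y i) i x) := by
    rw [h0]
    exact Finset.sum_congr rfl fun i _ => pd_sub (dAt (hconv i)) (dAt (hdmul i)) i
  rw [h1]
  have h2 : ∀ i : Fin 3, pd (fun y => convec v y i) i x
      = ∑ j, (pd (fun y => v y j) i x * pd (fun y => v y i) j x
          + v x j * pd (pd (fun y => v y i) j) i x) := by
    intro i
    have : (fun y => convec v y i) = fun y => ∑ j, v y j * pd (fun z => v z i) j y := rfl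
    rw [this, pd_sum (fun j _ => dAt (hmul i j))]
    refine Finset.sum_congr rfl fun j _ => ?_
    exact pd_mul (dAt (hv j)) (dAt (contDiff_pd (hv i) j)) i
  have h3 : ∀ i : Fin 3, pd (fun y => divg v y * v y i) i x
      = (∑ j, pd (pd (fun y => v y j) j) i x) * v x i
        + divg v x * pd (fun y => v y i) i x := by
    intro i
    rw [pd_mul (dAt hdivg) (dAt (hv i)) i]
    congr 2
    have : divg v = fun y => ∑ j, pd (fun z => v z j) j y := rfl
    rw [this, pd_sum (fun j _ => dAt (contDiff_pd (hv j) j))]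
  simp only [h2, h3, Finset.sum_sub_distrib, Finset.sum_add_distrib]
  have key : (∑ i : Fin 3, ∑ j : Fin 3, v x j * pd (pd (fun y => v y i) j) i x)
      = ∑ i : Fin 3, (∑ j : Fin 3, pd (pd (fun y => v y j) j) i x) * v x i := by
    rw [Finset.sum_comm]
    refine Finset.sum_congr rfl fun a _ => ?_
    rw [Finset.sum_mul]
    refine Finset.sum_congr rfl fun b _ => ?_
    rw [pd_comm (hv b) a b x, mul_comm]
  rw [key]
  have hdd : (∑ i : Fin 3, divg v x * pd (fun y => v y i) i x) = (divg v x) ^ 2 := by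
    rw [← Finset.mul_sum,
      show (∑ i : Fin 3, pd (fun y => v y i) i x) = divg v x from rfl]
    ring
  rw [hdd]
  ring

lemma gradsq_eq (v : (Fin 3 → ℝ) → Fin 3 → ℝ)
    (hv : ∀ i, ContDiff ℝ (⊤ : ℕ∞) fun y => v y i) (x : Fin 3 → ℝ) :
    gradsq v x = (divg v x) ^ 2 + curl v x ⬝ᵥ curl v x + surfT v x := by
  rw [surfT_formula v hv x]
  simp only [gradsq, divg, curl, dotProduct, Fin.sum_univ_three, Matrix.cons_val_zero,
    Matrix.cons_val_one, Matrix.head_cons, Matrix.cons_val_two, Matrix.tail_cons]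
  ring

lemma frame_sum (m : Fin 3 → Fin 3 → ℝ)
    (horth : ∀ i j, m i ⬝ᵥ m j = if i = j then 1 else 0) (u : Fin 3 → ℝ) :
    ∑ i, (m i ⬝ᵥ u) ^ 2 = u ⬝ᵥ u := by
  set M : Matrix (Fin 3) (Fin 3) ℝ := Matrix.of m with hMdef
  have hM : M * Mᵀ = 1 := by
    ext i j
    simpa [Matrix.mul_apply, Matrix.one_apply, dotProduct, M] using horth i j
  have hM2 : Mᵀ * M = 1 := mul_eq_one_comm.mp hM
  have h1 : ∑ i, (m i ⬝ᵥ u) ^ 2 = (M *ᵥ u) ⬝ᵥ (M *ᵥ u) := by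
    simp [dotProduct, Matrix.mulVec, sq, M, Finset.mul_sum, Finset.sum_mul]
  rw [h1, Matrix.dotProduct_mulVec, ← Matrix.mulVec_transpose, Matrix.mulVec_mulVec, hM2]
  simp

end Aux

/-- The biaxial elastic energy density `f_Bi`, with surface coefficients
`γ₁ = min{K₁,K₄,K₇,K₁₀}`, `γ₂ = min{K₂,K₅,K₈,K₁₁}`, `γ₃ = min{K₃,K₆,K₉,K₁₂}`,
rewrites as `f_Bi = ½ Σᵢ γᵢ|∇nᵢ|² + W(p,∇p)` with
`W = ½(Σᵢ kᵢ(∇·nᵢ)² + Σ_{i,j} k_{ij}(nᵢ·∇×nⱼ)²)`, all coefficients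
`kᵢ = Kᵢ − γᵢ` and `k_{ij}` nonnegative. -/
theorem stmt8 (K₁ K₂ K₃ K₄ K₅ K₆ K₇ K₈ K₉ K₁₀ K₁₁ K₁₂ : ℝ)
    (hK : 0 < K₁ ∧ 0 < K₂ ∧ 0 < K₃ ∧ 0 < K₄ ∧ 0 < K₅ ∧ 0 < K₆ ∧
      0 < K₇ ∧ 0 < K₈ ∧ 0 < K₉ ∧ 0 < K₁₀ ∧ 0 < K₁₁ ∧ 0 < K₁₂)
    (n : Fin 3 → (Fin 3 → ℝ) → Fin 3 → ℝ)
    (hsmooth : ∀ i, ContDiff ℝ (⊤ : ℕ∞) (n i))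
    (horth : ∀ i j x, n i x ⬝ᵥ n j x = if i = j then 1 else 0) :
    let γ₁ := min (min K₁ K₄) (min K₇ K₁₀)
    let γ₂ := min (min K₂ K₅) (min K₈ K₁₁)
    let γ₃ := min (min K₃ K₆) (min K₉ K₁₂)
    (0 ≤ K₁ - γ₁ ∧ 0 ≤ K₂ - γ₂ ∧ 0 ≤ K₃ - γ₃ ∧ 0 ≤ K₄ - γ₁ ∧ 0 ≤ K₅ - γ₂ ∧
      0 ≤ K₆ - γ₃ ∧ 0 ≤ K₇ - γ₁ ∧ 0 ≤ K₈ - γ₂ ∧ 0 ≤ K₉ - γ₃ ∧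
      0 ≤ K₁₀ - γ₁ ∧ 0 ≤ K₁₁ - γ₂ ∧ 0 ≤ K₁₂ - γ₃) ∧
    ∀ x : Fin 3 → ℝ,
      (1 / 2) * (K₁ * (divg (n 0) x) ^ 2 + K₂ * (divg (n 1) x) ^ 2
          + K₃ * (divg (n 2) x) ^ 2
          + K₄ * (n 0 x ⬝ᵥ curl (n 0) x) ^ 2 + K₅ * (n 1 x ⬝ᵥ curl (n 1) x) ^ 2
          + K₆ * (n 2 x ⬝ᵥ curl (n 2) x) ^ 2
          + K₇ * (n 2 x ⬝ᵥ curl (n 0) x) ^ 2 + K₈ * (n 0 x ⬝ᵥ curl (n 1) x) ^ 2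
          + K₉ * (n 1 x ⬝ᵥ curl (n 2) x) ^ 2
          + K₁₀ * (n 1 x ⬝ᵥ curl (n 0) x) ^ 2 + K₁₁ * (n 2 x ⬝ᵥ curl (n 1) x) ^ 2
          + K₁₂ * (n 0 x ⬝ᵥ curl (n 2) x) ^ 2
          + γ₁ * surfT (n 0) x + γ₂ * surfT (n 1) x + γ₃ * surfT (n 2) x)
        = (1 / 2) * (γ₁ * gradsq (n 0) x + γ₂ * gradsq (n 1) x
            + γ₃ * gradsq (n 2) x)
          + (1 / 2) * ((K₁ - γ₁) * (divg (n 0) x) ^ 2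
            + (K₂ - γ₂) * (divg (n 1) x) ^ 2 + (K₃ - γ₃) * (divg (n 2) x) ^ 2
            + (K₄ - γ₁) * (n 0 x ⬝ᵥ curl (n 0) x) ^ 2
            + (K₅ - γ₂) * (n 1 x ⬝ᵥ curl (n 1) x) ^ 2
            + (K₆ - γ₃) * (n 2 x ⬝ᵥ curl (n 2) x) ^ 2
            + (K₇ - γ₁) * (n 2 x ⬝ᵥ curl (n 0) x) ^ 2
            + (K₈ - γ₂) * (n 0 x ⬝ᵥ curl (n 1) x) ^ 2
            + (K₉ - γ₃) * (n 1 x ⬝ᵥ curl (n 2) x) ^ 2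
            + (K₁₀ - γ₁) * (n 1 x ⬝ᵥ curl (n 0) x) ^ 2
            + (K₁₁ - γ₂) * (n 2 x ⬝ᵥ curl (n 1) x) ^ 2
            + (K₁₂ - γ₃) * (n 0 x ⬝ᵥ curl (n 2) x) ^ 2) := by
  intro γ₁ γ₂ γ₃
  constructor
  · refine ⟨?_, ?_, ?_, ?_, ?_, ?_, ?_, ?_, ?_, ?_, ?_, ?_⟩ <;>
      rw [sub_nonneg] <;>
      first
        | exact le_trans (min_le_left _ _) (min_le_left _ _)
        | exact le_trans (min_le_left _ _) (min_le_right _ _)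
        | exact le_trans (min_le_right _ _) (min_le_left _ _)
        | exact le_trans (min_le_right _ _) (min_le_right _ _)
  · intro x
    have hcomp : ∀ i j, ContDiff ℝ (⊤ : ℕ∞) fun y => n i y j :=
      fun i j => (contDiff_pi.mp (hsmooth i)) j
    have hG : ∀ i : Fin 3,
        gradsq (n i) x = (divg (n i) x) ^ 2
          + ((n 0 x ⬝ᵥ curl (n i) x) ^ 2 + (n 1 x ⬝ᵥ curl (n i) x) ^ 2
            + (n 2 x ⬝ᵥ curl (n i) x) ^ 2) + surfT (n i) x := by
      intro i
      have h1 := gradsq_eq (n i) (hcomp i) x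
      have h2 := frame_sum (fun j => n j x) (fun a b => horth a b x) (curl (n i) x)
      rw [Fin.sum_univ_three] at h2
      rw [h1, ← h2]
    rw [hG 0, hG 1, hG 2]
    ring


end
end

section
/- Osgood uniqueness lemma: let Φ : [0,T] → [0,∞) be measurable, F : [0,T] → [0,∞) locally integrable, and μ : [0,∞) → [0,∞) a continuous nondecreasing function with μ(0)=0, μ(r)>0 for r>0, and ∫₀^b dr/μ(r) = ∞ for some b>0. If Φ(t) ≤ ∫₀ᵗ F(τ)μ(Φ(τ))dτ for almost every t ∈ [0,T], then Φ = 0 almost everywhere on [0,T]. -/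
/-!
Put `Ψ t = ∫₀ᵗ F μ(Φ)` and `B t = ∫₀ᵗ F`, so that `Φ ≤ Ψ` a.e. and `Ψ` is continuous and
nondecreasing. If `Ψ T > 0`, then for every `ε > 0` the function `W = ε + Ψ` satisfies
`W t - W s ≤ μ (W t) (B t - B s)`, a difference form of `(∫_ε^W dr/μ(r))' ≤ F`. Integrating it
(by continuous induction, since `W` need not be differentiable) gives
`∫_ε^{ε + Ψ T} dr/μ(r) ≤ B T` uniformly in `ε`, so `1/μ` is integrable near `0`,
contradicting the Osgood condition.
-/

open MeasureTheory Set Filter Topology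

theorem Monotone.antitoneOn_one_div {μ : ℝ → ℝ} (hμ : Monotone μ) {a : ℝ} (ha : 0 < μ a) :
    AntitoneOn (fun r => 1 / μ r) (Ici a) :=
  fun _ hx _ _ hxy => one_div_le_one_div_of_le (ha.trans_le (hμ hx)) (hμ hxy)

theorem Monotone.integrableOn_one_div {μ : ℝ → ℝ} (hμ : Monotone μ) {a : ℝ} (ha : 0 < μ a)
    (b : ℝ) : IntegrableOn (fun r => 1 / μ r) (Icc a b) :=
  ((hμ.antitoneOn_one_div ha).mono Icc_subset_Ici_self).integrableOn_isCompact isCompact_Icc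

theorem Monotone.intervalIntegrable_one_div {μ : ℝ → ℝ} (hμ : Monotone μ) {a b : ℝ}
    (ha : 0 < μ a) (hab : a ≤ b) : IntervalIntegrable (fun r => 1 / μ r) volume a b :=
  (intervalIntegrable_iff_integrableOn_Icc_of_le hab).2 (hμ.integrableOn_one_div ha b)

theorem Monotone.integral_one_div_le {μ : ℝ → ℝ} (hμ : Monotone μ) {x y : ℝ}
    (hx : 0 < μ x) (hxy : x ≤ y) : ∫ r in x..y, 1 / μ r ≤ (y - x) / μ x := by
  calc ∫ r in x..y, 1 / μ r ≤ ∫ _ in x..y, 1 / μ x :=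
        intervalIntegral.integral_mono_on hxy (hμ.intervalIntegrable_one_div hx hxy)
          intervalIntegrable_const fun r hr => hμ.antitoneOn_one_div hx self_mem_Ici hr.1 hr.1
    _ = (y - x) / μ x := by simp [div_eq_mul_inv]

theorem MeasureTheory.IntegrableOn.continuousOn_primitive_of_le {f : ℝ → ℝ} {a b : ℝ}
    (hf : IntegrableOn f (Icc a b)) (hab : a ≤ b) :
    ContinuousOn (fun t => ∫ x in a..t, f x) (Icc a b) := by
  have := intervalIntegral.continuousOn_primitive_interval (uIcc_of_le hab ▸ hf)
  rwa [uIcc_of_le hab] at this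

theorem MeasureTheory.IntegrableOn.monotoneOn_primitive_of_nonneg {f : ℝ → ℝ} {a b : ℝ}
    (hf : IntegrableOn f (Icc a b)) (hf0 : ∀ x, 0 ≤ f x) :
    MonotoneOn (fun t => ∫ x in a..t, f x) (Icc a b) := fun s hs t ht hst =>
  intervalIntegral.integral_mono_interval le_rfl hs.1 hst (ae_of_all _ fun x => hf0 x)
    ((intervalIntegrable_iff_integrableOn_Icc_of_le ht.1).2
      (hf.mono_set (Icc_subset_Icc_right ht.2)))

theorem MeasureTheory.IntegrableOn.primitive_sub_le_mul_sub {Φ F μ : ℝ → ℝ} {a b s t w : ℝ}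
    (hF : IntegrableOn F (Icc a b)) (hF0 : ∀ τ, 0 ≤ F τ) (hμ : Monotone μ)
    (hg : IntegrableOn (fun τ => F τ * μ (Φ τ)) (Icc a b)) (hs : s ∈ Icc a b) (ht : t ∈ Icc a b)
    (hst : s ≤ t) (hΦ : ∀ᵐ τ ∂(volume.restrict (Icc s t)), Φ τ ≤ w) :
    (∫ τ in a..t, F τ * μ (Φ τ)) - ∫ τ in a..s, F τ * μ (Φ τ)
      ≤ μ w * ((∫ τ in a..t, F τ) - ∫ τ in a..s, F τ) := by
  have hint : ∀ {f : ℝ → ℝ}, IntegrableOn f (Icc a b) → ∀ {x y}, x ∈ Icc a b → y ∈ Icc a b →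
      IntervalIntegrable f volume x y := fun hf x y hx hy =>
    (hf.mono_set (uIcc_subset_Icc hx hy)).intervalIntegrable
  have ha : a ∈ Icc a b := left_mem_Icc.2 (hs.1.trans hs.2)
  rw [intervalIntegral.integral_interval_sub_left (hint hg ha ht) (hint hg ha hs),
    intervalIntegral.integral_interval_sub_left (hint hF ha ht) (hint hF ha hs),
    ← intervalIntegral.integral_const_mul]
  refine intervalIntegral.integral_mono_ae_restrict hst (hint hg hs ht)
    ((hint hF hs ht).const_mul _) ?_
  filter_upwards [hΦ] with τ hτ
  rw [mul_comm (μ w)]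
  exact mul_le_mul_of_nonneg_left (hμ hτ) (hF0 τ)

/-- For `c > 1`, continuity of `ρ` gives `ρ t / ρ x ≤ c` just to the right of each `x`, so
`A t - A a ≤ c (B t - B a)` propagates along `[a, b]` by continuous induction; then `c → 1`. -/
theorem sub_le_sub_of_forall_sub_le_div_mul_sub {A B ρ : ℝ → ℝ} {a b : ℝ} (hab : a ≤ b)
    (hA : ContinuousOn A (Icc a b)) (hB : ContinuousOn B (Icc a b))
    (hBmono : MonotoneOn B (Icc a b)) (hρ : ContinuousOn ρ (Icc a b))
    (hρpos : ∀ x ∈ Icc a b, 0 < ρ x)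
    (hinc : ∀ x ∈ Icc a b, ∀ t ∈ Icc a b, x ≤ t → A t - A x ≤ ρ t / ρ x * (B t - B x)) :
    A b - A a ≤ B b - B a := by
  have key : ∀ c : ℝ, 1 < c → ∀ t ∈ Icc a b, A t - A a ≤ c * (B t - B a) := by
    intro c hc
    set s := {t | A t - A a ≤ c * (B t - B a)}
    have hs : IsClosed (s ∩ Icc a b) := by
      rw [inter_comm]
      exact isClosed_Icc.isClosed_le (hA.sub continuousOn_const)
        (continuousOn_const.mul (hB.sub continuousOn_const))
    refine hs.Icc_subset_of_forall_exists_gt (by simp [s]) ?_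
    rintro x ⟨hxs, hax, hxb⟩ y hxy
    have hx : x ∈ Icc a b := ⟨hax, hxb.le⟩
    have hIcc : Icc a b ∈ 𝓝[>] x :=
      mem_of_superset (Icc_mem_nhdsGT hxb) (Icc_subset_Icc_left hax)
    have hρx := hρpos x hx
    have hnear : ∀ᶠ t in 𝓝[>] x, ρ t < c * ρ x :=
      ((hρ x hx).mono_of_mem_nhdsWithin hIcc).eventually (gt_mem_nhds (by nlinarith))
    obtain ⟨t, hρt, htI, hxt, hty⟩ :=
      (hnear.and ((eventually_mem_set.2 hIcc).and (Ioc_mem_nhdsGT (lt_min hxy hxb)))).exists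
    refine ⟨t, ?_, hxt, hty.trans (min_le_left _ _)⟩
    have hratio : ρ t / ρ x ≤ c := (div_le_iff₀ hρx).2 hρt.le
    have hBxt : 0 ≤ B t - B x := sub_nonneg.2 (hBmono hx htI hxt.le)
    calc A t - A a = (A t - A x) + (A x - A a) := by ring
      _ ≤ ρ t / ρ x * (B t - B x) + c * (B x - B a) := add_le_add (hinc x hx t htI hxt.le) hxs
      _ ≤ c * (B t - B x) + c * (B x - B a) := by gcongr
      _ = c * (B t - B a) := by ring
  have hlim : Tendsto (fun c => c * (B b - B a)) (𝓝[>] 1) (𝓝 (B b - B a)) := by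
    simpa using ((continuous_mul_const (B b - B a)).tendsto 1).mono_left
      (nhdsWithin_le_nhds (s := Ioi 1))
  exact ge_of_tendsto hlim
    (eventually_nhdsWithin_of_forall fun c hc => key c hc b ⟨hab, le_rfl⟩)

theorem integral_one_div_le_sub_of_sub_le_mul_sub {μ W B : ℝ → ℝ} {a b : ℝ} (hab : a ≤ b)
    (hμ : Continuous μ) (hμmono : Monotone μ) (hμW : 0 < μ (W a))
    (hW : ContinuousOn W (Icc a b)) (hWmono : MonotoneOn W (Icc a b))
    (hB : ContinuousOn B (Icc a b))
    (hinc : ∀ s ∈ Icc a b, ∀ t ∈ Icc a b, s ≤ t → W t - W s ≤ μ (W t) * (B t - B s)) :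
    ∫ r in W a..W b, 1 / μ r ≤ B b - B a := by
  have hbI : b ∈ Icc a b := right_mem_Icc.2 hab
  have hWa : ∀ t ∈ Icc a b, W a ≤ W t := fun t ht => hWmono (left_mem_Icc.2 hab) ht ht.1
  have hμpos : ∀ t ∈ Icc a b, 0 < μ (W t) := fun t ht => hμW.trans_le (hμmono (hWa t ht))
  have hint : ∀ t ∈ Icc a b, IntervalIntegrable (fun r => 1 / μ r) volume (W a) (W t) :=
    fun t ht => hμmono.intervalIntegrable_one_div hμW (hWa t ht)
  have hBmono : MonotoneOn B (Icc a b) := fun s hs t ht hst => by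
    have := (sub_nonneg.2 (hWmono hs ht hst)).trans (hinc s hs t ht hst)
    exact sub_nonneg.1 (nonneg_of_mul_nonneg_right this (hμpos t ht))
  have hA : ContinuousOn (fun t => ∫ r in W a..W t, 1 / μ r) (Icc a b) :=
    ((hμmono.integrableOn_one_div hμW (W b)).continuousOn_primitive_of_le (hWa b hbI)).comp hW
      fun t ht => ⟨hWa t ht, hWmono ht hbI ht.2⟩
  have hAinc : ∀ x ∈ Icc a b, ∀ t ∈ Icc a b, x ≤ t →
      (∫ r in W a..W t, 1 / μ r) - ∫ r in W a..W x, 1 / μ r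
        ≤ μ (W t) / μ (W x) * (B t - B x) := by
    intro x hx t ht hxt
    rw [intervalIntegral.integral_interval_sub_left (hint t ht) (hint x hx)]
    calc ∫ r in W x..W t, 1 / μ r ≤ (W t - W x) / μ (W x) :=
          hμmono.integral_one_div_le (hμpos x hx) (hWmono hx ht hxt)
      _ ≤ μ (W t) * (B t - B x) / μ (W x) :=
          div_le_div_of_nonneg_right (hinc x hx t ht hxt) (hμpos x hx).le
      _ = μ (W t) / μ (W x) * (B t - B x) := by ring
  simpa using sub_le_sub_of_forall_sub_le_div_mul_sub hab hA hB hBmono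
    (hμ.comp_continuousOn hW) hμpos hAinc

theorem integrableOn_Ioc_of_forall_integral_le {f : ℝ → ℝ} {a C : ℝ} (ha : 0 < a)
    (hf : ∀ ε ∈ Ioc 0 a, IntervalIntegrable f volume ε a) (hf0 : ∀ r ∈ Ioc 0 a, 0 ≤ f r)
    (hC : ∀ ε ∈ Ioc 0 a, ∫ r in ε..a, f r ≤ C) : IntegrableOn f (Ioc 0 a) := by
  have hε : ∀ n : ℕ, a * (1 / (n + 1)) ∈ Ioc 0 a := fun n =>
    ⟨by positivity, mul_le_of_le_one_right ha.le (div_le_one_of_le₀ (by simp) (by positivity))⟩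
  refine integrableOn_Ioc_of_intervalIntegral_norm_bounded_left (l := atTop) (I := C)
    (fun n => (hf _ (hε n)).1) ?_ (Eventually.of_forall fun n => ?_)
  · simpa using tendsto_one_div_add_atTop_nhds_zero_nat.const_mul a
  calc ∫ x in Ioc _ a, ‖f x‖ = ∫ x in Ioc _ a, f x :=
        setIntegral_congr_fun measurableSet_Ioc fun x hx =>
          Real.norm_of_nonneg (hf0 x ⟨(hε n).1.trans hx.1, hx.2⟩)
    _ = ∫ x in _..a, f x := (intervalIntegral.integral_of_le (hε n).2).symm
    _ ≤ C := hC _ (hε n)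

theorem Monotone.integrableOn_one_div_Ioc_of_forall_integral_le {μ : ℝ → ℝ} (hμ : Monotone μ)
    (hμpos : ∀ r, 0 < r → 0 < μ r) {b c C : ℝ} (hb : 0 < b) (hc : 0 < c)
    (hC : ∀ ε > 0, ∫ r in ε..ε + c, 1 / μ r ≤ C) :
    IntegrableOn (fun r => 1 / μ r) (Ioc 0 b) := by
  set a := min c b
  have ha : 0 < a := lt_min hc hb
  have h0a : IntegrableOn (fun r => 1 / μ r) (Ioc 0 a) := by
    refine integrableOn_Ioc_of_forall_integral_le (C := C) ha
      (fun ε hε => hμ.intervalIntegrable_one_div (hμpos ε hε.1) hε.2)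
      (fun r hr => (one_div_pos.2 (hμpos r hr.1)).le) fun ε hε => ?_
    have hac : a ≤ ε + c := by linarith [min_le_left c b, hε.1]
    calc ∫ r in ε..a, 1 / μ r ≤ ∫ r in ε..ε + c, 1 / μ r :=
          intervalIntegral.integral_mono_interval le_rfl hε.2 hac
            ((ae_restrict_mem measurableSet_Ioc).mono fun r hr =>
              (one_div_pos.2 (hμpos r (hε.1.trans hr.1))).le)
            (hμ.intervalIntegrable_one_div (hμpos ε hε.1) (hε.2.trans hac))
      _ ≤ C := hC ε hε.1
  have hab : IntegrableOn (fun r => 1 / μ r) (Ioc a b) :=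
    (hμ.integrableOn_one_div (hμpos a ha) b).mono_set Ioc_subset_Icc_self
  exact Ioc_union_Ioc_eq_Ioc ha.le (min_le_right c b) ▸ h0a.union hab

theorem integral_one_div_le_integral_of_le_primitive {Φ F μ : ℝ → ℝ} {T ε : ℝ} (hT : 0 ≤ T)
    (hF : IntegrableOn F (Icc 0 T)) (hF0 : ∀ τ, 0 ≤ F τ) (hμ : Continuous μ)
    (hμmono : Monotone μ) (hμnonneg : ∀ r, 0 ≤ μ r) (hε : 0 ≤ ε) (hμε : 0 < μ ε)
    (hg : IntegrableOn (fun τ => F τ * μ (Φ τ)) (Icc 0 T))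
    (hΦ : ∀ᵐ t ∂(volume.restrict (Icc 0 T)), Φ t ≤ ∫ τ in 0..t, F τ * μ (Φ τ)) :
    ∫ r in ε..ε + ∫ τ in 0..T, F τ * μ (Φ τ), 1 / μ r ≤ ∫ τ in 0..T, F τ := by
  set Ψ : ℝ → ℝ := fun t => ∫ τ in 0..t, F τ * μ (Φ τ)
  have hΨmono : MonotoneOn Ψ (Icc 0 T) :=
    hg.monotoneOn_primitive_of_nonneg fun τ => mul_nonneg (hF0 τ) (hμnonneg _)
  have hinc : ∀ s ∈ Icc 0 T, ∀ t ∈ Icc 0 T, s ≤ t →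
      (ε + Ψ t) - (ε + Ψ s) ≤ μ (ε + Ψ t) * ((∫ τ in 0..t, F τ) - ∫ τ in 0..s, F τ) := by
    intro s hs t ht hst
    have hΦt : ∀ᵐ τ ∂(volume.restrict (Icc s t)), Φ τ ≤ ε + Ψ t := by
      filter_upwards [ae_restrict_of_ae_restrict_of_subset (Icc_subset_Icc hs.1 ht.2) hΦ,
        ae_restrict_mem measurableSet_Icc] with τ hτ hτI
      have := hΨmono ⟨hs.1.trans hτI.1, hτI.2.trans ht.2⟩ ht hτI.2
      linarith
    simpa using hF.primitive_sub_le_mul_sub hF0 hμmono hg hs ht hst hΦt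
  simpa [Ψ] using integral_one_div_le_sub_of_sub_le_mul_sub (W := fun t => ε + Ψ t) hT hμ
    hμmono (by simpa [Ψ] using hμε) (continuousOn_const.add (hg.continuousOn_primitive_of_le hT))
    (fun s hs t ht hst => (add_le_add_iff_left ε).2 (hΨmono hs ht hst))
    (hF.continuousOn_primitive_of_le hT) hinc

theorem stmt13_general (T b : ℝ) (hT : 0 < T) (hb : 0 < b)
    (Φ F μ : ℝ → ℝ)
    (hΦmeas : Measurable Φ) (hΦnonneg : ∀ t, 0 ≤ Φ t)
    (hΦbdd : ∃ M : ℝ, ∀ t, Φ t ≤ M)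
    (hFint : IntegrableOn F (Set.Icc 0 T)) (hFnonneg : ∀ t, 0 ≤ F t)
    (hμcont : Continuous μ) (hμmono : Monotone μ)
    (hμpos : ∀ r : ℝ, 0 < r → 0 < μ r)
    (hμnonneg : ∀ r, 0 ≤ μ r)
    (hOsgood : ¬ IntegrableOn (fun r => 1 / μ r) (Set.Ioc 0 b))
    (hineq : ∀ᵐ t ∂(volume.restrict (Set.Icc 0 T)),
      Φ t ≤ ∫ τ in Set.Ioc 0 t, F τ * μ (Φ τ)) :
    ∀ᵐ t ∂(volume.restrict (Set.Icc 0 T)), Φ t = 0 := by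
  obtain ⟨M, hM⟩ := hΦbdd
  set Ψ : ℝ → ℝ := fun t => ∫ τ in 0..t, F τ * μ (Φ τ)
  have hg : IntegrableOn (fun τ => F τ * μ (Φ τ)) (Icc 0 T) :=
    hFint.mul_bdd (hμcont.measurable.comp hΦmeas).aestronglyMeasurable
      (ae_of_all _ fun τ => (Real.norm_of_nonneg (hμnonneg _)).trans_le (hμmono (hM τ)))
  have hΦΨ : ∀ᵐ t ∂(volume.restrict (Icc 0 T)), Φ t ≤ Ψ t := by
    filter_upwards [hineq, ae_restrict_mem measurableSet_Icc] with t ht htI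
    rwa [← intervalIntegral.integral_of_le htI.1] at ht
  have hΨmono : MonotoneOn Ψ (Icc 0 T) :=
    hg.monotoneOn_primitive_of_nonneg fun τ => mul_nonneg (hFnonneg τ) (hμnonneg _)
  have hTI : T ∈ Icc 0 T := right_mem_Icc.2 hT.le
  by_cases hΨT : Ψ T ≤ 0
  · filter_upwards [hΦΨ, ae_restrict_mem measurableSet_Icc] with t hΦt ht
    exact le_antisymm (hΦt.trans ((hΨmono ht hTI ht.2).trans hΨT)) (hΦnonneg t)
  exact absurd (hμmono.integrableOn_one_div_Ioc_of_forall_integral_le hμpos hb (not_le.1 hΨT)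
    fun ε hε => integral_one_div_le_integral_of_le_primitive hT.le hFint hFnonneg hμcont hμmono
      hμnonneg hε.le (hμpos ε hε) hg hΦΨ) hOsgood

/-- Osgood uniqueness lemma: if `Φ : [0,T] → [0,∞)` is measurable and bounded,
`F : [0,T] → [0,∞)` is integrable, `μ` is a continuous nondecreasing Osgood
modulus of continuity (`μ(0) = 0`, `μ(r) > 0` for `r > 0`,
`∫₀^b dr/μ(r) = ∞`), and `Φ(t) ≤ ∫₀ᵗ F(τ)μ(Φ(τ))dτ` for a.e. `t ∈ [0,T]`,
then `Φ = 0` a.e. on `[0,T]`. -/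
theorem stmt13 (T b : ℝ) (hT : 0 < T) (hb : 0 < b)
    (Φ F μ : ℝ → ℝ)
    (hΦmeas : Measurable Φ) (hΦnonneg : ∀ t, 0 ≤ Φ t)
    (hΦbdd : ∃ M : ℝ, ∀ t, Φ t ≤ M)
    (hFint : IntegrableOn F (Set.Icc 0 T)) (hFnonneg : ∀ t, 0 ≤ F t)
    (hμcont : Continuous μ) (hμmono : Monotone μ)
    (hμ0 : μ 0 = 0) (hμpos : ∀ r : ℝ, 0 < r → 0 < μ r)
    (hμnonneg : ∀ r, 0 ≤ μ r)
    (hOsgood : ¬ IntegrableOn (fun r => 1 / μ r) (Set.Ioc 0 b))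
    (hineq : ∀ᵐ t ∂(volume.restrict (Set.Icc 0 T)),
      Φ t ≤ ∫ τ in Set.Ioc 0 t, F τ * μ (Φ τ)) :
    ∀ᵐ t ∂(volume.restrict (Set.Icc 0 T)), Φ t = 0 :=
  stmt13_general T b hT hb Φ F μ hΦmeas hΦnonneg hΦbdd hFint hFnonneg hμcont hμmono hμpos hμnonneg
    hOsgood hineq
end
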